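/- arXiv:1912.05263 — 4 statements merged into one kernel-verified Lean document; each statement's English description precedes it below -/
import Mathlib

section
/- Let A be a Noetherian ring, R = A[[x₁,...,xₙ]], M a finite R-module and N a finite A-module. Then the canonical map M ⊗_A N → (M ⊗_A N)^∧, where ^∧ denotes ⟨x⟩-adic completion, is injective. -/
open TensorProduct

/-!
Over the Noetherian ring `R = A[[x₁,…,xₙ]]` the module `M ⊗_A N` is finite, and the ideal
`⟨x⟩` lies in the Jacobson radical of `R` because a power series with unit constant term is a
unit. Krull's intersection theorem then makes `M ⊗_A N` Hausdorff for the `⟨x⟩`-adic topology,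
which is exactly injectivity of the map into the completion.
-/

theorem Module.Finite.tensorProduct_of_isScalarTower (A R M N : Type*) [CommRing A]
    [CommRing R] [Algebra A R] [AddCommGroup M] [AddCommGroup N] [Module A M] [Module A N]
    [Module R M] [IsScalarTower A R M] [Module.Finite R M] [Module.Finite A N] :
    Module.Finite R (M ⊗[A] N) :=
  Module.Finite.equiv (AlgebraTensorModule.cancelBaseChange A R R M N)

namespace MvPowerSeries

variable {σ R : Type*} [CommRing R]

theorem ker_constantCoeff_le_jacobson_bot :
    RingHom.ker (constantCoeff : MvPowerSeries σ R →+* R) ≤ (⊥ : Ideal _).jacobson := by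
  intro f hf
  rw [Ideal.mem_jacobson_bot]
  intro g
  rw [isUnit_iff_constantCoeff]
  simp [RingHom.mem_ker.mp hf]

theorem span_range_X_le_ker_constantCoeff :
    Ideal.span (Set.range (X : σ → MvPowerSeries σ R)) ≤ RingHom.ker constantCoeff := by
  rw [Ideal.span_le]
  rintro _ ⟨i, rfl⟩
  exact constantCoeff_X i

end MvPowerSeries

/-- Let `A` be a Noetherian ring, `R = A[[x₁,...,xₙ]]`, `M` a finite
`R`-module and `N` a finite `A`-module.  Then the canonical map
`M ⊗_A N → (M ⊗_A N)^∧` (the `⟨x⟩`-adic completion) is injective. -/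
theorem tensor_to_adicCompletion_injective
    (A : Type) [CommRing A] [IsNoetherianRing A] (n : ℕ)
    (M N : Type) [AddCommGroup M] [AddCommGroup N] [Module A M] [Module A N]
    [Module (MvPowerSeries (Fin n) A) M]
    [IsScalarTower A (MvPowerSeries (Fin n) A) M]
    [SMulCommClass A (MvPowerSeries (Fin n) A) M]
    [Module.Finite (MvPowerSeries (Fin n) A) M] [Module.Finite A N] :
    Function.Injective
      (AdicCompletion.of
        (Ideal.span (Set.range (MvPowerSeries.X : Fin n → MvPowerSeries (Fin n) A)))
        (M ⊗[A] N)) := by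
  have : Module.Finite (MvPowerSeries (Fin n) A) (M ⊗[A] N) :=
    .tensorProduct_of_isScalarTower A _ M N
  have : IsHausdorff
      (Ideal.span (Set.range (MvPowerSeries.X : Fin n → MvPowerSeries (Fin n) A))) (M ⊗[A] N) :=
    .of_le_jacobson _ _ <| MvPowerSeries.span_range_X_le_ker_constantCoeff.trans
      MvPowerSeries.ker_constantCoeff_le_jacobson_bot
  exact AdicCompletion.of_injective _ _
end

section
/- Let A be a Noetherian ring and M a finitely presented A-module. Then the fibre dimension function 𝔭 ↦ dim_{k(𝔭)} (M ⊗_A k(𝔭)) is upper semicontinuous on Spec A: every prime 𝔭 has an open neighbourhood U such that dim_{k(𝔮)} M ⊗_A k(𝔮) ≤ dim_{k(𝔭)} M ⊗_A k(𝔭) for all 𝔮 ∈ U. -/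
open TensorProduct

/-- The residue field `k(𝔭) = A_𝔭/𝔭A_𝔭` of `A` at a prime `𝔭`. -/
noncomputable abbrev resF (A : Type) [CommRing A] (p : PrimeSpectrum A) : Type :=
  IsLocalRing.ResidueField (Localization.AtPrime p.asIdeal)

/-!
Choose a basis `1 ⊗ v₁, …, 1 ⊗ vₙ` of the fibre `k(𝔭) ⊗ M` and let `N` be the span of the `vᵢ`.
For every prime `𝔮`, right exactness of `k(𝔮) ⊗ -` shows that the images of the `vᵢ` span the
fibre at `𝔮` exactly when `k(𝔮) ⊗ M/N = 0`, which by Nakayama means `𝔮 ∉ Supp(M/N)`. Since `M/N`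
is finite, its support is closed; its complement is an open neighbourhood of `𝔭` on which every
fibre is spanned by `n` vectors.
-/

open Module Submodule Set

section

variable {A M : Type*} [CommRing A] [AddCommGroup M] [Module A M]

theorem Submodule.baseChange_residueField_eq_top_iff_notMem_support [Module.Finite A M]
    (N : Submodule A M) (q : PrimeSpectrum A) :
    N.baseChange q.asIdeal.ResidueField = ⊤ ↔ q ∉ support A (M ⧸ N) := by
  rw [mem_support_iff_nontrivial_residueField_tensorProduct, not_nontrivial_iff_subsingleton,
    (AlgebraTensorModule.tensorQuotientEquiv q.asIdeal.ResidueField A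
      q.asIdeal.ResidueField N).subsingleton_congr,
    Submodule.Quotient.subsingleton_iff]
  rfl

theorem finrank_le_card_of_baseChange_span_eq_top {K : Type*} [CommRing K] [StrongRankCondition K]
    [Algebra A K] {ι : Type*} [Fintype ι] {v : ι → M}
    (hv : (span A (range v)).baseChange K = ⊤) :
    finrank K (K ⊗[A] M) ≤ Fintype.card ι := by
  rw [baseChange_span, ← range_comp] at hv
  rw [← finrank_top, ← hv]
  exact finrank_range_le_card _

variable (M) in
theorem exists_fin_finrank_baseChange_span_eq_top (K : Type*) [Field K] [Algebra A K]
    [Module.Finite A M] :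
    ∃ (n : ℕ) (v : Fin n → M), n = finrank K (K ⊗[A] M) ∧
      (span A (range v)).baseChange K = ⊤ := by
  have hspan : span K (range (TensorProduct.mk A K M 1)) = ⊤ := by
    simpa using (baseChange_span (R := A) K (univ : Set M)).symm
  obtain ⟨f, hf, hf_span, -⟩ :=
    exists_fun_fin_finrank_span_eq K (range (TensorProduct.mk A K M 1))
  choose v hv using hf
  refine ⟨_, v, by rw [hspan, finrank_top], ?_⟩
  rw [baseChange_span, ← range_comp, show TensorProduct.mk A K M 1 ∘ v = f from funext hv,
    hf_span, hspan]

end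

theorem fibre_dimension_upper_semicontinuous_general
    (A M : Type) [CommRing A]
    [AddCommGroup M] [Module A M] [Module.FinitePresentation A M]
    (p : PrimeSpectrum A) :
    ∃ U : Set (PrimeSpectrum A), IsOpen U ∧ p ∈ U ∧ ∀ q ∈ U,
      Module.finrank (resF A q) ((resF A q) ⊗[A] M) ≤
        Module.finrank (resF A p) ((resF A p) ⊗[A] M) := by
  obtain ⟨n, v, hn, hv⟩ := exists_fin_finrank_baseChange_span_eq_top (A := A) M (resF A p)
  set N := span A (range v)
  refine ⟨(support A (M ⧸ N))ᶜ, isClosed_support.isOpen_compl,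
    (N.baseChange_residueField_eq_top_iff_notMem_support p).mp hv, fun q hq ↦ ?_⟩
  rw [← hn, ← Fintype.card_fin n]
  exact finrank_le_card_of_baseChange_span_eq_top
    ((N.baseChange_residueField_eq_top_iff_notMem_support q).mpr hq)

/-- Let `A` be a Noetherian ring and `M` a finitely presented `A`-module.
Then the fibre dimension function `𝔭 ↦ dim_{k(𝔭)} (M ⊗_A k(𝔭))` is upper semicontinuous
on `Spec A`. -/
theorem fibre_dimension_upper_semicontinuous
    (A M : Type) [CommRing A] [IsNoetherianRing A]
    [AddCommGroup M] [Module A M] [Module.FinitePresentation A M]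
    (p : PrimeSpectrum A) :
    ∃ U : Set (PrimeSpectrum A), IsOpen U ∧ p ∈ U ∧ ∀ q ∈ U,
      Module.finrank (resF A q) ((resF A q) ⊗[A] M) ≤
        Module.finrank (resF A p) ((resF A p) ⊗[A] M) :=
  fibre_dimension_upper_semicontinuous_general A M p
end

section
/- Let A be a Noetherian ring, M a finitely presented A-module which is flat over A. Then the fibre dimension 𝔭 ↦ dim_{k(𝔭)} M ⊗_A k(𝔭) is locally constant on Spec A. -/
open TensorProduct

/-- Let `A` be a Noetherian ring and `M` a finitely presented flat
`A`-module.  Then the fibre dimension `𝔭 ↦ dim_{k(𝔭)} M ⊗_A k(𝔭)` is locally constant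
on `Spec A`. -/
theorem fibre_dimension_locallyConstant_of_flat
    (A M : Type) [CommRing A] [IsNoetherianRing A]
    [AddCommGroup M] [Module A M] [Module.FinitePresentation A M] [Module.Flat A M] :
    IsLocallyConstant
      (fun p : PrimeSpectrum A => Module.finrank (resF A p) ((resF A p) ⊗[A] M)) := by
  have key : (fun p : PrimeSpectrum A =>
      Module.finrank (resF A p) ((resF A p) ⊗[A] M)) = Module.rankAtStalk M := by
    funext p
    set Ap := Localization.AtPrime p.asIdeal
    set k := resF A p
    -- `Aₚ ⊗[A] M ≅ Mₚ` is free over `Aₚ` since `M` is flat and finitely presented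
    have hmem : p ∈ Module.freeLocus A M := by
      rw [Module.freeLocus_eq_univ]; trivial
    have hfree : Module.Free Ap (Ap ⊗[A] M) :=
      (Module.mem_freeLocus_iff_tensor p Ap).mp hmem
    have hfin : Module.Finite Ap (Ap ⊗[A] M) :=
      Module.Finite.base_change A Ap M
    -- cancel the base change: `k ⊗[Ap] (Ap ⊗[A] M) ≅ k ⊗[A] M`
    let e : k ⊗[Ap] (Ap ⊗[A] M) ≃ₗ[k] k ⊗[A] M :=
      TensorProduct.AlgebraTensorModule.cancelBaseChange A Ap k k M
    -- `Ap ⊗[A] M ≅ Mₚ` as `Aₚ`-modules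
    let e2 : Ap ⊗[A] M ≃ₗ[Ap] LocalizedModule p.asIdeal.primeCompl M :=
      (IsLocalizedModule.isBaseChange p.asIdeal.primeCompl Ap
        (LocalizedModule.mkLinearMap p.asIdeal.primeCompl M)).equiv
    have h1 : Module.finrank k (k ⊗[A] M) = Module.finrank k (k ⊗[Ap] (Ap ⊗[A] M)) :=
      e.symm.finrank_eq
    have h2 : Module.finrank k (k ⊗[Ap] (Ap ⊗[A] M)) = Module.finrank Ap (Ap ⊗[A] M) :=
      Module.finrank_baseChange
    have h3 : Module.finrank Ap (Ap ⊗[A] M) =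
        Module.finrank Ap (LocalizedModule p.asIdeal.primeCompl M) := e2.finrank_eq
    rw [h1, h2, h3, Module.rankAtStalk]
  rw [key]
  exact Module.isLocallyConstant_rankAtStalk
end

section
/- Let K be a field, A = K[t], R = A[[x]], and M = R/⟨t − x⟩ ≅ K[[t]] as an A-module (via f(x,t) ↦ f(t,t)). Then M ⊗_A k(⟨0⟩) ≅ K((t)), the field of formal Laurent series, which is infinite-dimensional over K(t); hence the fibre dimension 𝔭 ↦ dim_{k(𝔭)} M ⊗_A k(𝔭) is not upper semicontinuous on Spec A. -/
/-!
Substituting `x := t` identifies `K[t]⟦x⟧ ⧸ (t - x)` with `K⟦t⟧`; the cofactor of `t - x` in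
`F - F(t, t)` is assembled coefficientwise from iterated `divX`. At the generic point the fibre
is the base change of `K⟦t⟧` to the fraction field `K(t)`, which preserves rank, and it is `K⸨t⸩`
because `K⸨t⸩ = K⟦t⟧[t⁻¹]`. The lacunary series `∑ₘ t ^ 2 ^ ⟪i, m⟫` are `K[t]`-linearly
independent, since each has monomials arbitrarily far from all monomials of the others; so the
generic fibre has infinite rank. At the closed point `t = 1` the fibre vanishes, as `t - 1` is
a unit in `K⟦t⟧`, although the generic point lies in every neighbourhood of that point.
-/

set_option synthInstance.maxHeartbeats 1000000
set_option maxHeartbeats 1000000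

open TensorProduct
open scoped RatFunc

open Finset
open scoped Polynomial PowerSeries LaurentSeries nonZeroDivisors

namespace Polynomial

variable {R : Type*} [Semiring R]

theorem coeff_divX_iterate (p : R[X]) (m n : ℕ) : (divX^[m] p).coeff n = p.coeff (n + m) := by
  induction m generalizing p with
  | zero => rfl
  | succ m ih => rw [Function.iterate_succ_apply, ih, coeff_divX, add_assoc]

theorem X_mul_divX_iterate_succ_add (p : R[X]) (m : ℕ) :
    X * divX^[m + 1] p + C (p.coeff m) = divX^[m] p := by
  rw [Function.iterate_succ_apply', ← zero_add m, ← coeff_divX_iterate, zero_add]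
  exact X_mul_divX_add _

theorem eq_zero_of_C_eq_X_mul {a : R} {q : R[X]} (h : C a = X * q) : a = 0 ∧ q = 0 := by
  refine ⟨by simpa using congr_arg (coeff · 0) h, ext fun k ↦ ?_⟩
  simpa [coeff_C] using (congr_arg (coeff · (k + 1)) h).symm

end Polynomial

theorem Nat.two_pow_add_lt_or_two_pow_add_lt {a b d : ℕ} (hab : a ≠ b) (hd : d < a) :
    2 ^ a + d < 2 ^ b ∨ 2 ^ b + d < 2 ^ a := by
  obtain ⟨c, rfl⟩ : ∃ c, a = c + 1 := ⟨a - 1, by omega⟩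
  have hdc : d < 2 ^ c := (Nat.lt_succ_iff.mp hd).trans_lt c.lt_two_pow_self
  rcases hab.lt_or_gt with h | h
  · have : 2 ^ (c + 2) ≤ 2 ^ b := Nat.pow_le_pow_right two_pos h
    rw [pow_succ, pow_succ] at this
    rw [pow_succ]
    omega
  · have : 2 ^ b ≤ 2 ^ c := Nat.pow_le_pow_right two_pos (by omega)
    rw [pow_succ]
    omega

namespace PowerSeries

variable {R : Type*} [CommRing R]

/-- The substitution `x := t` in `F = ∑ᵢ Fᵢ(t) xⁱ`. -/
noncomputable def diagonal (F : R[X]⟦X⟧) : R⟦X⟧ :=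
  mk fun n ↦ ∑ i ∈ range (n + 1), (coeff i F).coeff (n - i)

noncomputable def divCXSubX (F : R[X]⟦X⟧) : R[X]⟦X⟧ :=
  mk fun n ↦ ∑ i ∈ range (n + 1), Polynomial.divX^[n + 1 - i] (coeff i F)

theorem X_mul_coeff_divCXSubX_add (F : R[X]⟦X⟧) (n : ℕ) :
    Polynomial.X * coeff n (divCXSubX F) + Polynomial.C (coeff n (diagonal F)) =
      ∑ i ∈ range (n + 1), Polynomial.divX^[n - i] (coeff i F) := by
  simp only [divCXSubX, diagonal, coeff_mk, mul_sum, map_sum, ← sum_add_distrib]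
  refine sum_congr rfl fun i hi ↦ ?_
  rw [Nat.sub_add_comm (mem_range_succ_iff.mp hi)]
  exact Polynomial.X_mul_divX_iterate_succ_add _ _

theorem C_X_sub_X_mul_divCXSubX (F : R[X]⟦X⟧) :
    (C Polynomial.X - X) * divCXSubX F = F - map Polynomial.C (diagonal F) := by
  ext n : 1
  rw [map_sub, coeff_map, eq_sub_iff_add_eq, sub_mul, map_sub, coeff_C_mul, sub_add_eq_add_sub,
    X_mul_coeff_divCXSubX_add, sub_eq_iff_eq_add, sum_range_succ, Nat.sub_self,
    Function.iterate_zero_apply]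
  rcases n with _ | n
  · simp
  · rw [coeff_succ_X_mul, add_comm, divCXSubX, coeff_mk]

theorem eq_zero_of_map_C_eq_C_X_sub_X_mul {g : R⟦X⟧} {Q : R[X]⟦X⟧}
    (h : map Polynomial.C g = (C Polynomial.X - X) * Q) : g = 0 := by
  have key (n : ℕ) : coeff n g = 0 ∧ coeff n Q = 0 := by
    induction n with
    | zero =>
      apply Polynomial.eq_zero_of_C_eq_X_mul
      simpa [sub_mul] using congr_arg (coeff 0) h
    | succ n ih =>
      apply Polynomial.eq_zero_of_C_eq_X_mul
      simpa [sub_mul, coeff_succ_X_mul, ih.2] using congr_arg (coeff (n + 1)) h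
  ext n
  simpa using (key n).1

/- `R[X]` acts on `R[X]⟦X⟧` through `PowerSeries.algebraPolynomial`, i.e. `t` acts as `x`, not as
`C t`; the two actions agree modulo `C t - x`. -/
instance : IsScalarTower R[X] R⟦X⟧ R[X]⟦X⟧ := IsScalarTower.of_algebraMap_eq' rfl

noncomputable def quotientSpanCXSubXAlgEquiv :
    R⟦X⟧ ≃ₐ[R[X]] R[X]⟦X⟧ ⧸ Ideal.span {(C Polynomial.X - X : R[X]⟦X⟧)} := by
  refine AlgEquiv.ofBijective ((Ideal.Quotient.mkₐ R[X] _).comp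
    (IsScalarTower.toAlgHom R[X] R⟦X⟧ R[X]⟦X⟧)) ⟨?_, ?_⟩
  · rw [injective_iff_map_eq_zero]
    intro g hg
    obtain ⟨Q, hQ⟩ := Ideal.mem_span_singleton'.mp (Ideal.Quotient.eq_zero_iff_mem.mp hg)
    exact eq_zero_of_map_C_eq_C_X_sub_X_mul (hQ.symm.trans (mul_comm _ _))
  · rintro ⟨F⟩
    refine ⟨diagonal F, (Ideal.Quotient.eq.mpr ?_).symm⟩
    refine Ideal.mem_span_singleton'.mpr ⟨divCXSubX F, ?_⟩
    rw [mul_comm, C_X_sub_X_mul_divCXSubX]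
    rfl

theorem isUnit_algebraMap_iff {p : R[X]} :
    IsUnit (algebraMap R[X] R⟦X⟧ p) ↔ IsUnit (p.coeff 0) := by
  rw [isUnit_iff_constantCoeff]
  simp [algebraMap_apply']

theorem coeff_polynomial_smul (p : R[X]) (φ : R⟦X⟧) (n : ℕ) :
    coeff n (p • φ) = ∑ x ∈ antidiagonal n, p.coeff x.1 * coeff x.2 φ := by
  simp [Algebra.smul_def, algebraMap_apply', coeff_mul]

theorem linearIndependent_of_isolated_coeff {ι : Type*} (f : ι → R⟦X⟧)
    (hf : ∀ i d, ∃ e, coeff e (f i) = 1 ∧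
      ∀ j n, (j, n) ≠ (i, e) → n ≤ e + d → e ≤ n + d → coeff n (f j) = 0) :
    LinearIndependent R[X] f := by
  classical
  refine linearIndependent_iff'.mpr fun s g hsum i hi ↦ ?_
  set d := s.sup fun j ↦ (g j).natDegree
  have hdeg : ∀ j ∈ s, ∀ k, d < k → (g j).coeff k = 0 := fun j hj k hk ↦
    Polynomial.coeff_eq_zero_of_natDegree_lt <|
      (le_sup (f := fun j ↦ (g j).natDegree) hj).trans_lt hk
  obtain ⟨e, he, hiso⟩ := hf i d
  have hcoeff : ∀ v ≤ d, coeff (e + v) (∑ j ∈ s, g j • f j) = (g i).coeff v := by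
    intro v hv
    have hzero : ∀ j ∈ s, ∀ x ∈ antidiagonal (e + v), (j, x.2) ≠ (i, e) →
        (g j).coeff x.1 * coeff x.2 (f j) = 0 := by
      rintro j hj ⟨k, l⟩ hkl hne
      rw [HasAntidiagonal.mem_antidiagonal] at hkl
      by_cases hk : k ≤ d
      · rw [hiso j l hne (by omega) (by omega), mul_zero]
      · rw [hdeg j hj k (not_le.mp hk), zero_mul]
    rw [map_sum, sum_eq_single i, coeff_polynomial_smul, sum_eq_single (v, e), he, mul_one]
    · rintro ⟨k, l⟩ hkl hne
      refine hzero i hi _ hkl fun h ↦ hne ?_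
      simp only [HasAntidiagonal.mem_antidiagonal, Prod.mk.injEq] at hkl h ⊢
      omega
    · exact fun h ↦ absurd (HasAntidiagonal.mem_antidiagonal.mpr (add_comm v e)) h
    · intro j hj hji
      rw [coeff_polynomial_smul]
      exact sum_eq_zero fun x hx ↦ hzero j hj x hx (by simp [hji])
    · exact fun h ↦ absurd hi h
  ext v
  rw [Polynomial.coeff_zero]
  by_cases hv : v ≤ d
  · rw [← hcoeff v hv, hsum, map_zero]
  · exact hdeg i hi v (not_le.mp hv)

variable (R) in
open Classical in
noncomputable def lacunary (i : ℕ) : R⟦X⟧ :=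
  mk fun n ↦ if ∃ m, n = 2 ^ Nat.pair i m then 1 else 0

theorem lacunary_isolated_coeff [Nontrivial R] (i d : ℕ) : ∃ e, coeff e (lacunary R i) = 1 ∧
    ∀ j n, (j, n) ≠ (i, e) → n ≤ e + d → e ≤ n + d → coeff n (lacunary R j) = 0 := by
  refine ⟨2 ^ Nat.pair i (d + 1), by simp [lacunary], fun j n hne hle hge ↦ ?_⟩
  simp only [lacunary, coeff_mk, ite_eq_right_iff, one_ne_zero, imp_false, not_exists]
  rintro m rfl
  have hpair : Nat.pair j m ≠ Nat.pair i (d + 1) := by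
    rintro h
    obtain ⟨rfl, rfl⟩ := Nat.pair_eq_pair.mp h
    exact hne rfl
  have hd : d < Nat.pair i (d + 1) := Nat.lt_of_succ_le (Nat.right_le_pair i (d + 1))
  have := Nat.two_pow_add_lt_or_two_pow_add_lt hpair.symm hd
  omega

theorem aleph0_le_rank_polynomial [Nontrivial R] : Cardinal.aleph0 ≤ Module.rank R[X] R⟦X⟧ :=
  (linearIndependent_of_isolated_coeff _ (lacunary_isolated_coeff (R := R))).aleph0_le_rank

end PowerSeries

namespace LaurentSeries

variable (K : Type*) [Field K]

instance : IsScalarTower K[X] K⟦X⟧ K⸨X⸩ := IsScalarTower.of_algebraMap_eq' rfl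

instance : IsLocalization (Algebra.algebraMapSubmonoid K⟦X⟧ K[X]⁰) K⸨X⸩ := by
  refine IsLocalization.of_le (Submonoid.powers PowerSeries.X) _ ?_ ?_
  · rintro _ ⟨n, rfl⟩
    exact ⟨Polynomial.X ^ n, pow_mem (mem_nonZeroDivisors_of_ne_zero Polynomial.X_ne_zero) n,
      by simp [PowerSeries.algebraMap_apply']⟩
  · rintro _ ⟨p, hp, rfl⟩
    rw [← IsScalarTower.algebraMap_apply]
    exact (map_ne_zero_iff _ (FaithfulSMul.algebraMap_injective K[X] K⸨X⸩)).mpr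
      (nonZeroDivisors.ne_zero hp) |>.isUnit

theorem isBaseChange_powerSeries :
    IsBaseChange (RatFunc K) (IsScalarTower.toAlgHom K[X] K⟦X⟧ K⸨X⸩).toLinearMap :=
  haveI := (isLocalizedModule_iff_isLocalization (S := K[X]⁰) (A := K⟦X⟧) (Aₛ := K⸨X⸩)).mpr
    inferInstance
  IsLocalizedModule.isBaseChange K[X]⁰ (RatFunc K) _

end LaurentSeries

theorem subsingleton_tensorProduct_of_isUnit {A F B : Type*} [CommRing A] [CommRing F]
    [CommRing B] [Algebra A F] [Algebra A B] {a : A} (h0 : algebraMap A F a = 0)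
    (ha : IsUnit (algebraMap A B a)) : Subsingleton (F ⊗[A] B) := by
  refine subsingleton_of_forall_eq 0 fun z ↦ z.induction_on rfl (fun c b ↦ ?_)
    fun x y hx hy ↦ by rw [hx, hy, add_zero]
  obtain ⟨u, hu⟩ := ha
  have hb : b = a • (↑u⁻¹ * b) := by
    rw [Algebra.smul_def, ← hu, ← mul_assoc, u.mul_inv, one_mul]
  rw [hb, ← smul_tmul, Algebra.smul_def, h0, zero_mul, zero_tmul]

theorem rank_resF_bot_tensorProduct {A M : Type} [CommRing A] [IsDomain A] [AddCommGroup M]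
    [Module A M] : Module.rank (resF A ⊥) (resF A ⊥ ⊗[A] M) = Module.rank A M := by
  have : FaithfulSMul A (resF A ⊥) :=
    (inferInstance : FaithfulSMul A (⊥ : Ideal A).ResidueField)
  have h := TensorProduct.isBaseChange A M (resF A ⊥)
  exact h.rank_eq

/-- Let `K` be a field, `A = K[t]`, `R = A[[x]]`, and `M = R/⟨t − x⟩`.
Then the fibre of `M` at the generic point `⟨0⟩` (whose residue field is `K(t)`) is the
field of formal Laurent series `K((t))`, which is infinite-dimensional over `K(t)`;
hence the fibre dimension `𝔭 ↦ dim_{k(𝔭)} M ⊗_A k(𝔭)` is not upper semicontinuous on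
`Spec A`. -/
theorem fibre_dimension_not_semicontinuous (K : Type) [Field K] :
    Nonempty (((RatFunc K) ⊗[Polynomial K]
        (PowerSeries (Polynomial K) ⧸
          Ideal.span {PowerSeries.C (R := Polynomial K) Polynomial.X - PowerSeries.X}))
      ≃ₗ[RatFunc K] LaurentSeries K) ∧
    ¬ Module.Finite (RatFunc K) (LaurentSeries K) ∧
    ¬ (∀ p : PrimeSpectrum (Polynomial K),
        ∃ U : Set (PrimeSpectrum (Polynomial K)), IsOpen U ∧ p ∈ U ∧ ∀ q ∈ U,
          Module.rank (resF (Polynomial K) q) ((resF (Polynomial K) q) ⊗[Polynomial K]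
            (PowerSeries (Polynomial K) ⧸
              Ideal.span {PowerSeries.C (R := Polynomial K) Polynomial.X - PowerSeries.X})) ≤
          Module.rank (resF (Polynomial K) p) ((resF (Polynomial K) p) ⊗[Polynomial K]
            (PowerSeries (Polynomial K) ⧸
              Ideal.span {PowerSeries.C (R := Polynomial K) Polynomial.X - PowerSeries.X}))) := by
  let e := PowerSeries.quotientSpanCXSubXAlgEquiv (R := K)
  have hbc := LaurentSeries.isBaseChange_powerSeries K
  have hrank : Cardinal.aleph0 ≤ Module.rank K[X] K⟦X⟧ :=
    PowerSeries.aleph0_le_rank_polynomial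
  refine ⟨⟨(e.symm.toLinearEquiv.baseChange _ _ _ _).trans hbc.equiv⟩, fun _ ↦ ?_,
    fun h ↦ ?_⟩
  · exact (Module.rank_lt_aleph0 (RatFunc K) K⸨X⸩).not_ge (hbc.rank_eq ▸ hrank)
  let p : PrimeSpectrum K[X] := ⟨Ideal.span {Polynomial.X - Polynomial.C 1},
    (Ideal.span_singleton_prime (Polynomial.X_sub_C_ne_zero 1)).mpr (Polynomial.prime_X_sub_C 1)⟩
  obtain ⟨U, hU, hpU, hle⟩ := h p
  have hgeneric := hle ⊥ (((PrimeSpectrum.le_iff_specializes _ _).mp bot_le).mem_open hU hpU)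
  have : p.asIdeal.IsPrime := p.isPrime
  have := subsingleton_tensorProduct_of_isUnit (F := resF K[X] p)
    (Ideal.algebraMap_residueField_eq_zero.mpr (Ideal.mem_span_singleton_self _))
    (e.commutes _ ▸ (PowerSeries.isUnit_algebraMap_iff.mpr (by simp)).map e)
  rw [rank_resF_bot_tensorProduct, e.symm.toLinearEquiv.rank_eq,
    rank_subsingleton' (resF K[X] p)] at hgeneric
  exact Cardinal.aleph0_pos.not_ge (hrank.trans hgeneric)
end
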